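/- The neural code C = {{2,3,4,5}, {1,2,3}, {1,3,4}, {1,4,5}, {1,3}, {1,4}, {2,3}, {3,4}, {4,5}, {1}, {3}, {4}, ∅} on 5 neurons (obtained by adding the codeword {1} to the code {{2,3,4,5}, {1,2,3}, {1,3,4}, {1,4,5}, {1,3}, {1,4}, {2,3}, {3,4}, {4,5}, {3}, {4}, ∅}) is convex: there exist convex open sets U₁, …, U₅ ⊆ ℝ³ that realize C. -/

import Mathlib

/-- The atom of a codeword `σ` with respect to the sets `U i`:
`(⋂ i ∈ σ, U i) \ ⋃ j ∉ σ, U j`. -/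
def codeAtom {n : ℕ} {X : Type*} (U : Fin n → Set X) (σ : Finset (Fin n)) : Set X :=
  (⋂ i ∈ σ, U i) \ ⋃ (j : Fin n) (_ : j ∉ σ), U j

/-- A collection `U` of subsets of `X` realizes the code `C` if `⋃ i, U i ⊊ X` and,
for every nonempty `σ ⊆ [n]`, `σ ∈ C` iff the atom of `σ` is nonempty. -/
def Realizes {n : ℕ} {X : Type*} (U : Fin n → Set X) (C : Set (Finset (Fin n))) : Prop :=
  (⋃ i, U i) ⊂ Set.univ ∧
  ∀ σ : Finset (Fin n), σ.Nonempty → (σ ∈ C ↔ (codeAtom U σ).Nonempty)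

/-- The code obtained by adding the codeword `1` to the counterexample code
`{2345, 123, 134, 145, 13, 14, 23, 34, 45, 3, 4, ∅}`
(with neurons `1,…,5` encoded as `0,…,4` in `Fin 5`). -/
def augmentedCode' : Set (Finset (Fin 5)) :=
  {{1, 2, 3, 4}, {0, 1, 2}, {0, 2, 3}, {0, 3, 4}, {0, 2}, {0, 3},
   {1, 2}, {2, 3}, {3, 4}, {0}, {2}, {3}, ∅}

/-!
Number the neurons from `0` as in `augmentedCode'` and write `x, y, z` for the coordinates of `ℝ³`.
Take the open half-spaces `U₀ = {y + z > 1}`, `U₂ = {y < x}`, `U₃ = {x + y < 0}`, and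
`U₁ = U₂ ∩ {z < 1}`, `U₄ = U₃ ∩ {z < 1}`. Then `U₁ ⊆ U₂`, `U₄ ⊆ U₃`, `U₁ ∩ U₃ ⊆ U₄` and
`U₂ ∩ U₄ ⊆ U₁`, and `U₀ ∩ U₁ ∩ U₃ = ∅` since `y < -|x| ≤ 0` and `z < 1` on `U₁ ∩ U₃`.
The nonempty sets of neurons compatible with these five relations are exactly the nonempty
codewords of `augmentedCode'`, and each of them is the code of an explicit point.
The origin lies on the boundary of every `Uᵢ`, so it is outside their union.
-/

open Set

section OpenHalfSpace

variable {E : Type*} [AddCommGroup E] [Module ℝ E] [TopologicalSpace E]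

def openHalfSpace (ℓ : StrongDual ℝ E) (c : ℝ) : Set E := {p | ℓ p < c}

@[simp] lemma mem_openHalfSpace {ℓ : StrongDual ℝ E} {c : ℝ} {p : E} :
    p ∈ openHalfSpace ℓ c ↔ ℓ p < c := Iff.rfl

lemma convex_openHalfSpace (ℓ : StrongDual ℝ E) (c : ℝ) : Convex ℝ (openHalfSpace ℓ c) :=
  convex_halfSpace_lt ℓ.toLinearMap.isLinear c

lemma isOpen_openHalfSpace (ℓ : StrongDual ℝ E) (c : ℝ) : IsOpen (openHalfSpace ℓ c) :=
  isOpen_lt ℓ.continuous continuous_const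

end OpenHalfSpace

lemma mem_codeAtom_iff {n : ℕ} {X : Type*} {U : Fin n → Set X} {σ : Finset (Fin n)} {p : X} :
    p ∈ codeAtom U σ ↔ ∀ i, p ∈ U i ↔ i ∈ σ := by
  simp only [codeAtom, mem_sdiff, mem_iInter, mem_iUnion, not_exists]
  exact ⟨fun h i => ⟨fun hi => by_contra fun hσ => h.2 i hσ hi, h.1 i⟩,
    fun h => ⟨fun i => (h i).2, fun i hσ hi => hσ ((h i).1 hi)⟩⟩

set_option synthInstance.maxSize 256 in
lemma mem_augmentedCode'_of_closed (σ : Finset (Fin 5)) (hne : σ.Nonempty)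
    (h12 : 1 ∈ σ → 2 ∈ σ) (h43 : 4 ∈ σ → 3 ∈ σ) (h134 : 1 ∈ σ → 3 ∈ σ → 4 ∈ σ)
    (h241 : 2 ∈ σ → 4 ∈ σ → 1 ∈ σ) (h013 : ¬(0 ∈ σ ∧ 1 ∈ σ ∧ 3 ∈ σ)) :
    σ ∈ augmentedCode' := by
  simp only [augmentedCode', mem_insert_iff, mem_singleton_iff]
  revert σ
  decide

open EuclideanSpace in
noncomputable def augmentedRealization : Fin 5 → Set (EuclideanSpace ℝ (Fin 3)) :=
  ![openHalfSpace (-proj 1 - proj 2) (-1),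
    openHalfSpace (proj 1 - proj 0) 0 ∩ openHalfSpace (proj 2) 1,
    openHalfSpace (proj 1 - proj 0) 0,
    openHalfSpace (proj 0 + proj 1) 0,
    openHalfSpace (proj 0 + proj 1) 0 ∩ openHalfSpace (proj 2) 1]

lemma convex_augmentedRealization (i : Fin 5) : Convex ℝ (augmentedRealization i) := by
  fin_cases i
  exacts [convex_openHalfSpace _ _, (convex_openHalfSpace _ _).inter (convex_openHalfSpace _ _),
    convex_openHalfSpace _ _, convex_openHalfSpace _ _,
    (convex_openHalfSpace _ _).inter (convex_openHalfSpace _ _)]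

lemma isOpen_augmentedRealization (i : Fin 5) : IsOpen (augmentedRealization i) := by
  fin_cases i
  exacts [isOpen_openHalfSpace _ _, (isOpen_openHalfSpace _ _).inter (isOpen_openHalfSpace _ _),
    isOpen_openHalfSpace _ _, isOpen_openHalfSpace _ _,
    (isOpen_openHalfSpace _ _).inter (isOpen_openHalfSpace _ _)]

lemma iUnion_augmentedRealization_ssubset_univ : (⋃ i, augmentedRealization i) ⊂ univ := by
  refine ssubset_univ_iff.mpr <| (ne_univ_iff_exists_notMem _).mpr ⟨0, ?_⟩
  simp [augmentedRealization, Fin.forall_fin_succ]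

lemma mem_augmentedCode'_of_mem_codeAtom {σ : Finset (Fin 5)} {p : EuclideanSpace ℝ (Fin 3)}
    (hne : σ.Nonempty) (hp : p ∈ codeAtom augmentedRealization σ) : σ ∈ augmentedCode' := by
  rw [mem_codeAtom_iff] at hp
  refine mem_augmentedCode'_of_closed σ hne ?_ ?_ ?_ ?_ ?_ <;>
    simp [← hp, augmentedRealization] <;> grind

attribute [local simp] Matrix.cons_val_two in
lemma codeAtom_augmentedRealization_nonempty {σ : Finset (Fin 5)} (hσ : σ ∈ augmentedCode')
    (hne : σ.Nonempty) : (codeAtom augmentedRealization σ).Nonempty := by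
  simp only [augmentedCode', mem_insert_iff, mem_singleton_iff] at hσ
  rcases hσ with rfl | rfl | rfl | rfl | rfl | rfl | rfl | rfl | rfl | rfl | rfl | rfl | rfl
  on_goal 13 => exact absurd hne Finset.not_nonempty_empty
  all_goals simp [Set.Nonempty, mem_codeAtom_iff, Fin.forall_fin_succ, augmentedRealization]
  exacts [⟨!₂[0, -1, 0], by norm_num⟩, ⟨!₂[3, 2, 0], by norm_num⟩, ⟨!₂[0, -1, 3], by norm_num⟩,
    ⟨!₂[-3, 2, 0], by norm_num⟩, ⟨!₂[3, 2, 2], by norm_num⟩, ⟨!₂[-3, 2, 2], by norm_num⟩,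
    ⟨!₂[3, 0, 0], by norm_num⟩, ⟨!₂[0, -1, 1], by norm_num⟩, ⟨!₂[-3, 0, 0], by norm_num⟩,
    ⟨!₂[0, 2, 0], by norm_num⟩, ⟨!₂[3, 0, 1], by norm_num⟩, ⟨!₂[-3, 0, 1], by norm_num⟩]

lemma realizes_augmentedRealization : Realizes augmentedRealization augmentedCode' :=
  ⟨iUnion_augmentedRealization_ssubset_univ, fun _ hne =>
    ⟨fun hσ => codeAtom_augmentedRealization_nonempty hσ hne,
      fun ⟨_, hp⟩ => mem_augmentedCode'_of_mem_codeAtom hne hp⟩⟩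

/-- **Proposition 3.4.** The code obtained by adding the codeword `1` to the
counterexample code is convex: it has a realization by convex open sets in `ℝ³`. -/
theorem augmentedCode'_convex :
    ∃ U : Fin 5 → Set (EuclideanSpace ℝ (Fin 3)),
      (∀ i, Convex ℝ (U i)) ∧ (∀ i, IsOpen (U i)) ∧ Realizes U augmentedCode' :=
  ⟨augmentedRealization, convex_augmentedRealization, isOpen_augmentedRealization,
    realizes_augmentedRealization⟩
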